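/- For any design phi and any behaviour-forming set of designs, the bi-orthogonal of the singleton {phi} is exactly the upward closure of phi in the observational order: {phi}^⊥⊥ = { phi' : phi ⊑ phi' }. -/

import Mathlib

/-! Designs of ludics, as (possibly infinitely branching) trees of alternating
positive actions `(+, ξ, I)` and negative actions `(-, ζ, J)`, with leaves
`Ω` (the partial design) and the daimon `✠`. Addresses (loci) are lists of
natural numbers (biases). -/

mutual
  inductive PosDesign : Type
    | omega : PosDesign
    | daimon : PosDesign
    | pos : List ℕ → Finset ℕ → (ℕ → NegDesign) → PosDesign
  inductive NegDesign : Type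
    | neg : (Finset ℕ → PosDesign) → NegDesign
end

def NegDesign.app : NegDesign → Finset ℕ → PosDesign
  | .neg f, J => f J

/-! The order `⊑` on designs, generated by `Ω ⊑ φ`, `φ ⊑ ✠`, congruence,
reflexivity and transitivity.  The two boolean parameters state whether the
axiom `Ω ⊑ φ` (resp. `φ ⊑ ✠`) is allowed: `LeP true true` is the observational
order `⊑`, `LeP false true` is `≤L`, and `LeP true false` is `≤R` (the stable
order). -/

mutual
  inductive LeP (o d : Bool) : PosDesign → PosDesign → Prop
    | omega (φ : PosDesign) (h : o = true) : LeP o d .omega φ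
    | daimon (φ : PosDesign) (h : d = true) : LeP o d φ .daimon
    | refl (φ : PosDesign) : LeP o d φ φ
    | trans {φ₁ φ₂ φ₃ : PosDesign} :
        LeP o d φ₁ φ₂ → LeP o d φ₂ φ₃ → LeP o d φ₁ φ₃
    | pos (ξ : List ℕ) (I : Finset ℕ) (k k' : ℕ → NegDesign)
        (h : ∀ i ∈ I, LeN o d (k i) (k' i)) : LeP o d (.pos ξ I k) (.pos ξ I k')
  inductive LeN (o d : Bool) : NegDesign → NegDesign → Prop
    | neg (f f' : Finset ℕ → PosDesign)
        (h : ∀ J, LeP o d (f J) (f' J)) : LeN o d (.neg f) (.neg f')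
end

/-! Normalization (the affine abstract machine) and orthogonality. -/

/-- The environment update in rule (R): the cut design at address `ξ` is
consumed, and its immediate subdesigns `k i` (for `i ∈ I`) are installed at the
addresses `ξ ⋆ i`. -/
def stepEnv (Ψ : List ℕ → Option NegDesign) (ξ : List ℕ) (I : Finset ℕ)
    (k : ℕ → NegDesign) : List ℕ → Option NegDesign :=
  fun ζ =>
    if ζ ≠ [] ∧ ζ.dropLast = ξ ∧ ζ.getLast! ∈ I then some (k ζ.getLast!)
    else if ζ = ξ then none else Ψ ζ

/-- `Conv φ Ψ` : the normalization of the net `⟨φ | Ψ⟩` converges, i.e. the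
weak reduction machine started on `φ` with environment `Ψ` reaches `✠`. -/
inductive Conv : PosDesign → (List ℕ → Option NegDesign) → Prop
  | dai (Ψ : List ℕ → Option NegDesign) : Conv .daimon Ψ
  | step (ξ : List ℕ) (I : Finset ℕ) (k : ℕ → NegDesign)
      (f : Finset ℕ → PosDesign) (Ψ : List ℕ → Option NegDesign)
      (h : Ψ ξ = some (.neg f)) :
      Conv (f I) (stepEnv Ψ ξ I k) → Conv (.pos ξ I k) Ψ

/-- Orthogonality of a positive design on the base `⊢ ε` and a negative design
on the base `ε ⊢`: normalization of the cut between them converges to `✠`. -/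
def orth (φ : PosDesign) (ψ : NegDesign) : Prop :=
  Conv φ (fun ζ => if ζ = [] then some ψ else none)

/-! Typing (well-formedness) of designs on a given base. -/

mutual
  /-- `WFP φ Λ` : `φ` is a design on the positive base `⊢ Λ`. -/
  inductive WFP : PosDesign → Finset (List ℕ) → Prop
    | omega (Λ : Finset (List ℕ)) : WFP .omega Λ
    | dai (Λ : Finset (List ℕ)) : WFP .daimon Λ
    | pos (ξ : List ℕ) (I : Finset ℕ) (k : ℕ → NegDesign)
        (Λ : Finset (List ℕ)) (Λi : ℕ → Finset (List ℕ))
        (hξ : ξ ∈ Λ)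
        (hsub : ∀ i ∈ I, Λi i ⊆ Λ.erase ξ)
        (hdisj : ∀ i ∈ I, ∀ j ∈ I, i ≠ j → Disjoint (Λi i) (Λi j))
        (hk : ∀ i ∈ I, WFN (k i) (ξ ++ [i]) (Λi i)) :
        WFP (.pos ξ I k) Λ
  /-- `WFN ψ ξ Λ` : `ψ` is a design on the negative base `ξ ⊢ Λ`. -/
  inductive WFN : NegDesign → List ℕ → Finset (List ℕ) → Prop
    | neg (f : Finset ℕ → PosDesign) (ξ : List ℕ) (Λ : Finset (List ℕ))
        (h : ∀ J : Finset ℕ, WFP (f J) (J.image (fun j => ξ ++ [j]) ∪ Λ)) :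
        WFN (.neg f) ξ Λ
end

/-! If `φ ⊑ χ`, every normalization from `φ` is matched step by step from `χ`: by inversion of
`⊑`, a design above `(+, ξ, I, k)` is `✠` or `(+, ξ, I, k')` with `k ⊑ k'` pointwise, so
convergence is monotone in the design and in the environment.

Conversely, if `φ ⋢ χ` one builds counter-designs separating them, by induction on `φ` over
bases that are antichains of addresses. If `φ = ✠`, counter-designs answering `Ω` everywhere
suffice. If the first action `(ξ, I)` of `φ` is not that of `χ`, the counter-design at `ξ`
answers `✠` to `I` only. Otherwise `(k i) J ⋢ (k' i) J` for some `i ∈ I` and `J`; the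
counter-design at `ξ` answers `I` by the action `(ξ ⋆ i, J)`, whose subdesigns are the
counter-designs separating `(k i) J` from `(k' i) J`, given by induction on the base
`{ξ ⋆ i ⋆ j | j ∈ J} ∪ Λ \ {ξ}`. -/

section Order

variable {o d : Bool}

theorem LeN.iff_app {ν ν' : NegDesign} :
    LeN o d ν ν' ↔ ∀ J, LeP o d (ν.app J) (ν'.app J) := by
  cases ν with
  | neg f =>
    cases ν' with
    | neg f' =>
      constructor
      · rintro ⟨⟩
        assumption
      · exact LeN.neg f f'

theorem LeN.refl (ν : NegDesign) : LeN o d ν ν :=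
  LeN.iff_app.2 fun _ => LeP.refl _

theorem LeN.trans {ν₁ ν₂ ν₃ : NegDesign} (h₁₂ : LeN o d ν₁ ν₂) (h₂₃ : LeN o d ν₂ ν₃) :
    LeN o d ν₁ ν₃ :=
  LeN.iff_app.2 fun J => (LeN.iff_app.1 h₁₂ J).trans (LeN.iff_app.1 h₂₃ J)

theorem LeP.eq_daimon_of_daimon_le {χ : PosDesign} (h : LeP o d .daimon χ) :
    χ = .daimon := by
  suffices ∀ φ χ, LeP o d φ χ → φ = .daimon → χ = .daimon from this _ _ h rfl
  intro φ χ h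
  refine LeP.rec (motive_1 := fun φ χ _ => φ = .daimon → χ = .daimon)
    (motive_2 := fun _ _ _ => True) ?_ ?_ ?_ ?_ ?_ ?_ h
  · intro _ _ h; cases h
  · intro _ _ _; rfl
  · intro _ h; exact h
  · intro _ _ _ _ _ ih₁₂ ih₂₃ h; exact ih₂₃ (ih₁₂ h)
  · intro _ _ _ _ _ _ h; cases h
  · intros; trivial

theorem LeP.pos_le_inv {ξ : List ℕ} {I : Finset ℕ} {k : ℕ → NegDesign} {χ : PosDesign}
    (h : LeP o d (.pos ξ I k) χ) :
    χ = .daimon ∨ ∃ k', χ = .pos ξ I k' ∧ ∀ i ∈ I, LeN o d (k i) (k' i) := by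
  suffices ∀ φ χ, LeP o d φ χ → ∀ ξ I k, φ = .pos ξ I k →
      χ = .daimon ∨ ∃ k', χ = .pos ξ I k' ∧ ∀ i ∈ I, LeN o d (k i) (k' i) from
    this _ _ h ξ I k rfl
  intro φ χ h
  refine LeP.rec (motive_2 := fun _ _ _ => True)
    (motive_1 := fun φ χ _ => ∀ ξ I k, φ = .pos ξ I k →
      χ = .daimon ∨ ∃ k', χ = .pos ξ I k' ∧ ∀ i ∈ I, LeN o d (k i) (k' i))
    ?_ ?_ ?_ ?_ ?_ ?_ h
  · intro _ _ _ _ _ h; cases h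
  · intros; exact .inl rfl
  · rintro _ _ _ _ rfl
    exact .inr ⟨_, rfl, fun i _ => LeN.refl _⟩
  · rintro _ _ _ _ h₂₃ ih₁₂ ih₂₃ ξ I k rfl
    obtain rfl | ⟨k₂, rfl, hk₁₂⟩ := ih₁₂ ξ I k rfl
    · exact .inl h₂₃.eq_daimon_of_daimon_le
    obtain rfl | ⟨k₃, rfl, hk₂₃⟩ := ih₂₃ ξ I k₂ rfl
    · exact .inl rfl
    · exact .inr ⟨k₃, rfl, fun i hi => (hk₁₂ i hi).trans (hk₂₃ i hi)⟩
  · rintro _ _ _ _ hk _ _ _ _ ⟨⟩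
    exact .inr ⟨_, rfl, hk⟩
  · intros; trivial

end Order

section Normalization

variable {E E' : List ℕ → Option NegDesign} {ξ : List ℕ} {I : Finset ℕ} {k : ℕ → NegDesign}

theorem stepEnv_append_singleton {i : ℕ} (hi : i ∈ I) :
    stepEnv E ξ I k (ξ ++ [i]) = some (k i) := by
  simp [stepEnv, hi]

theorem stepEnv_of_not_prefix {ζ : List ℕ} (hζ : ¬ ξ <+: ζ) : stepEnv E ξ I k ζ = E ζ := by
  have hne : ζ ≠ ξ := by
    rintro rfl
    exact hζ List.prefix_rfl
  have hdrop : ζ.dropLast ≠ ξ := by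
    rintro rfl
    exact hζ (List.dropLast_prefix ζ)
  simp [stepEnv, hne, hdrop]

theorem conv_pos_iff {ν : NegDesign} (h : E ξ = some ν) :
    Conv (.pos ξ I k) E ↔ Conv (ν.app I) (stepEnv E ξ I k) := by
  cases ν with
  | neg f =>
    constructor
    · intro hc
      cases hc with | step _ _ _ f' _ hf' hconv =>
      rw [h] at hf'
      cases hf'
      exact hconv
    · exact Conv.step ξ I k f E h

theorem not_conv_omega : ¬ Conv .omega E := nofun

theorem not_conv_pos_of_app_eq_omega {ν : NegDesign} (h : E ξ = some ν)
    (hν : ν.app I = .omega) : ¬ Conv (.pos ξ I k) E := by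
  rw [conv_pos_iff h, hν]
  exact not_conv_omega

variable {o d : Bool}

theorem stepEnv_mono (hE : ∀ ζ, Option.Rel (LeN o d) (E ζ) (E' ζ)) {k' : ℕ → NegDesign}
    (hk : ∀ i ∈ I, LeN o d (k i) (k' i)) (ζ : List ℕ) :
    Option.Rel (LeN o d) (stepEnv E ξ I k ζ) (stepEnv E' ξ I k' ζ) := by
  simp only [stepEnv]
  split_ifs with hlast
  · exact .some (hk _ hlast.2.2)
  · exact .none
  · exact hE ζ

theorem Conv.mono {φ χ : PosDesign} (h : Conv φ E) (hle : LeP o d φ χ)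
    (hE : ∀ ζ, Option.Rel (LeN o d) (E ζ) (E' ζ)) : Conv χ E' := by
  induction h generalizing χ E' with
  | dai =>
    rw [hle.eq_daimon_of_daimon_le]
    exact .dai _
  | step ξ I k f E hf _ ih =>
    obtain rfl | ⟨k', rfl, hk⟩ := hle.pos_le_inv
    · exact .dai _
    have hrel := hE ξ
    rcases hν' : E' ξ with _ | ν'
    · simp [hf, hν'] at hrel
    rw [hf, hν', Option.rel_some_some] at hrel
    rw [conv_pos_iff hν']
    exact ih (LeN.iff_app.1 hrel I) (stepEnv_mono hE hk)

theorem orth_mono {φ χ : PosDesign} (hle : LeP o d φ χ) {ψ : NegDesign} (h : orth φ ψ) :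
    orth χ ψ :=
  h.mono hle fun ζ => by
    by_cases hζ : ζ = []
    · simpa [hζ] using Option.Rel.some (LeN.refl ψ)
    · simp [hζ]

end Normalization

namespace NegDesign

def omega : NegDesign := .neg fun _ => .omega

def answer (I : Finset ℕ) (φ : PosDesign) : NegDesign := .neg fun J => if J = I then φ else .omega

@[simp] theorem answer_app (I J : Finset ℕ) (φ : PosDesign) :
    (answer I φ).app J = if J = I then φ else .omega := rfl

end NegDesign

section Typing

variable {ξ : List ℕ} {Λ Λ' : Finset (List ℕ)}

theorem WFP.mono {φ : PosDesign} (h : WFP φ Λ) (hΛ : Λ ⊆ Λ') : WFP φ Λ' := by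
  cases h with
  | omega => exact .omega _
  | dai => exact .dai _
  | pos ξ I k _ Λi hξ hsub hdisj hk =>
    exact .pos ξ I k Λ' Λi (hΛ hξ) (fun i hi => (hsub i hi).trans (Finset.erase_subset_erase _ hΛ))
      hdisj hk

theorem WFN.app {ν : NegDesign} (h : WFN ν ξ Λ) (J : Finset ℕ) :
    WFP (ν.app J) ((J.image fun j => ξ ++ [j]) ∪ Λ) := by
  obtain ⟨f, _, _, hf⟩ := h
  exact hf J

theorem WFP.pos_inv {I : Finset ℕ} {k : ℕ → NegDesign} (h : WFP (.pos ξ I k) Λ) :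
    ξ ∈ Λ ∧ ∀ i ∈ I, ∀ J,
      WFP ((k i).app J) ((J.image fun j => ξ ++ [i] ++ [j]) ∪ Λ.erase ξ) := by
  obtain _ | _ | ⟨_, _, _, _, Λi, hξ, hsub, -, hk⟩ := h
  refine ⟨hξ, fun i hi J => ?_⟩
  exact ((hk i hi).app J).mono (Finset.union_subset_union_right (hsub i hi))

theorem wfn_omega : WFN .omega ξ Λ := .neg _ _ _ fun _ => .omega _

theorem wfn_answer {I : Finset ℕ} {φ : PosDesign} (h : WFP φ (I.image fun i => ξ ++ [i])) :
    WFN (.answer I φ) ξ ∅ := by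
  refine .neg _ _ _ fun J => ?_
  by_cases hJ : J = I
  · subst hJ
    simpa using h
  · simpa [hJ] using WFP.omega _

end Typing

section Antichain

variable {Λ : Finset (List ℕ)} {ξ σ : List ℕ}

theorem not_prefix_of_isAntichain (hΛ : IsAntichain List.IsPrefix (Λ : Set (List ℕ)))
    (hσ : σ ∈ Λ) (hξ : ξ ∈ Λ) (hne : σ ≠ ξ) {ζ : List ℕ} (hζ : ξ <+: ζ) : ¬ σ <+: ζ :=
  fun hσζ => (List.prefix_or_prefix_of_prefix hσζ hζ).elim (hΛ hσ hξ hne) (hΛ hξ hσ hne.symm)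

theorem isAntichain_step (hΛ : IsAntichain List.IsPrefix (Λ : Set (List ℕ))) (hξ : ξ ∈ Λ)
    (i : ℕ) (J : Finset ℕ) :
    IsAntichain List.IsPrefix
      (((J.image fun j => ξ ++ [i] ++ [j]) ∪ Λ.erase ξ : Finset (List ℕ)) : Set (List ℕ)) := by
  rw [Finset.coe_union, Finset.coe_image, isAntichain_union]
  refine ⟨?_, hΛ.subset (Finset.coe_subset.2 (Finset.erase_subset ξ Λ)), ?_⟩
  · rintro _ ⟨j, -, rfl⟩ _ ⟨j', -, rfl⟩ hne hpre
    exact hne (hpre.eq_of_length_le (by simp))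
  · rintro _ ⟨j, -, rfl⟩ σ hσ -
    obtain ⟨hσξ, hσΛ⟩ := Finset.mem_erase.1 hσ
    have hξpre : ξ <+: ξ ++ [i] ++ [j] := (List.prefix_append _ _).trans (List.prefix_append _ _)
    exact ⟨fun hpre => not_prefix_of_isAntichain hΛ hσΛ hξ hσξ (hξpre.trans hpre) List.prefix_rfl,
      not_prefix_of_isAntichain hΛ hσΛ hξ hσξ hξpre⟩

end Antichain

/-- The separation must hold in every environment extending `Ψ`: during normalization the
environment also collects subdesigns of the net itself. -/
def Separable (Λ : Finset (List ℕ)) (φ χ : PosDesign) : Prop :=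
  ∃ Ψ : List ℕ → NegDesign, (∀ σ ∈ Λ, WFN (Ψ σ) σ ∅) ∧
    ∀ E : List ℕ → Option NegDesign, (∀ σ ∈ Λ, E σ = some (Ψ σ)) → Conv φ E ∧ ¬ Conv χ E

section Separation

variable {Λ : Finset (List ℕ)} {ξ : List ℕ} {I : Finset ℕ} {k : ℕ → NegDesign}

theorem not_conv_of_app_eq_omega {χ : PosDesign} {Ψ : List ℕ → NegDesign}
    {E : List ℕ → Option NegDesign} (hχ : WFP χ Λ) (hχd : χ ≠ .daimon)
    (hE : ∀ σ ∈ Λ, E σ = some (Ψ σ))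
    (hΨ : ∀ ξ' I' k', χ = .pos ξ' I' k' → (Ψ ξ').app I' = .omega) : ¬ Conv χ E := by
  cases χ with
  | omega => exact not_conv_omega
  | daimon => exact absurd rfl hχd
  | pos ξ' I' k' => exact not_conv_pos_of_app_eq_omega (hE ξ' hχ.pos_inv.1) (hΨ ξ' I' k' rfl)

theorem separable_daimon {χ : PosDesign} (hχ : WFP χ Λ) (hχd : χ ≠ .daimon) :
    Separable Λ .daimon χ :=
  ⟨fun _ => .omega, fun _ _ => wfn_omega, fun _ hE =>
    ⟨.dai _, not_conv_of_app_eq_omega hχ hχd hE fun _ _ _ _ => rfl⟩⟩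

theorem separable_pos_of_ne {χ : PosDesign} (hξ : ξ ∈ Λ) (hχ : WFP χ Λ) (hχd : χ ≠ .daimon)
    (hχξ : ∀ k', χ ≠ .pos ξ I k') : Separable Λ (.pos ξ I k) χ := by
  refine ⟨Function.update (fun _ => .omega) ξ (.answer I .daimon), fun σ _ => ?_, fun E hE => ?_⟩
  · rw [Function.update_apply]
    split_ifs with hσ
    · exact wfn_answer (.dai _)
    · exact wfn_omega
  refine ⟨?_, not_conv_of_app_eq_omega hχ hχd hE fun ξ' I' k' hχeq => ?_⟩
  · rw [conv_pos_iff (hE ξ hξ)]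
    simpa using Conv.dai _
  · rw [Function.update_apply]
    split_ifs with hξ'
    · subst hξ' hχeq
      simpa using fun hI => hχξ k' (by rw [hI])
    · rfl

theorem separable_pos_pos {k' : ℕ → NegDesign}
    (hΛ : IsAntichain List.IsPrefix (Λ : Set (List ℕ))) (hξ : ξ ∈ Λ) {i : ℕ} (hi : i ∈ I)
    {J : Finset ℕ}
    (hsep : Separable ((J.image fun j => ξ ++ [i] ++ [j]) ∪ Λ.erase ξ)
      ((k i).app J) ((k' i).app J)) :
    Separable Λ (.pos ξ I k) (.pos ξ I k') := by
  obtain ⟨Ψ, hΨ, hΨsep⟩ := hsep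
  set m : ℕ → NegDesign := fun j => Ψ (ξ ++ [i] ++ [j])
  refine ⟨Function.update Ψ ξ (.answer I (.pos (ξ ++ [i]) J m)), fun σ hσ => ?_, fun E hE => ?_⟩
  · rw [Function.update_apply]
    split_ifs with hσξ
    · subst hσξ
      refine wfn_answer (.pos _ J m _ (fun _ => ∅) (Finset.mem_image_of_mem _ hi)
        (fun _ _ => Finset.empty_subset _) (fun _ _ _ _ _ => Finset.disjoint_empty_left _)
        fun j hj => ?_)
      exact hΨ _ (Finset.mem_union_left _ (Finset.mem_image_of_mem _ hj))
    · exact hΨ σ (Finset.mem_union_right _ (Finset.mem_erase.2 ⟨hσξ, hσ⟩))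
  have hconv : ∀ κ : ℕ → NegDesign, Conv (.pos ξ I κ) E ↔
      Conv ((κ i).app J) (stepEnv (stepEnv E ξ I κ) (ξ ++ [i]) J m) := fun κ => by
    rw [conv_pos_iff (hE ξ hξ), Function.update_self, NegDesign.answer_app, if_pos rfl,
      conv_pos_iff (stepEnv_append_singleton hi)]
  have hagree : ∀ κ : ℕ → NegDesign, ∀ σ ∈ (J.image fun j => ξ ++ [i] ++ [j]) ∪ Λ.erase ξ,
      stepEnv (stepEnv E ξ I κ) (ξ ++ [i]) J m σ = some (Ψ σ) := by
    intro κ σ hσ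
    rcases Finset.mem_union.1 hσ with hσ | hσ
    · obtain ⟨j, hj, rfl⟩ := Finset.mem_image.1 hσ
      exact stepEnv_append_singleton hj
    · obtain ⟨hσξ, hσΛ⟩ := Finset.mem_erase.1 hσ
      have hξσ : ¬ ξ <+: σ := fun h =>
        not_prefix_of_isAntichain hΛ hσΛ hξ hσξ h List.prefix_rfl
      rw [stepEnv_of_not_prefix fun h => hξσ ((List.prefix_append _ _).trans h),
        stepEnv_of_not_prefix hξσ, hE σ hσΛ, Function.update_of_ne hσξ]
  exact ⟨(hconv k).2 (hΨsep _ (hagree k)).1, fun h => (hΨsep _ (hagree k')).2 ((hconv k').1 h)⟩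

end Separation

theorem exists_not_le_app_of_not_le {ξ : List ℕ} {I : Finset ℕ} {k k' : ℕ → NegDesign}
    {o d : Bool} (h : ¬ LeP o d (.pos ξ I k) (.pos ξ I k')) :
    ∃ i ∈ I, ∃ J, ¬ LeP o d ((k i).app J) ((k' i).app J) := by
  by_contra! hle
  exact h (.pos ξ I k k' fun i hi => LeN.iff_app.2 (hle i hi))

theorem separable_of_not_le (φ : PosDesign) :
    ∀ (χ : PosDesign) (Λ : Finset (List ℕ)), IsAntichain List.IsPrefix (Λ : Set (List ℕ)) →
      WFP φ Λ → WFP χ Λ → ¬ LeP true true φ χ → Separable Λ φ χ := by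
  let P (φ : PosDesign) : Prop := ∀ (χ : PosDesign) (Λ : Finset (List ℕ)),
    IsAntichain List.IsPrefix (Λ : Set (List ℕ)) → WFP φ Λ → WFP χ Λ → ¬ LeP true true φ χ →
      Separable Λ φ χ
  refine PosDesign.rec (motive_1 := P) (motive_2 := fun ν => ∀ J, P (ν.app J)) ?_ ?_ ?_ ?_ φ
  · intro χ _ _ _ _ hle
    exact absurd (.omega χ rfl) hle
  · intro χ _ _ _ hχ hle
    exact separable_daimon hχ fun h => hle (h ▸ .refl _)
  · intro ξ I k ih χ Λ hΛ hφ hχ hle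
    have hχd : χ ≠ .daimon := fun h => hle (h ▸ .daimon _ rfl)
    by_cases hχξ : ∃ k', χ = .pos ξ I k'
    · obtain ⟨k', rfl⟩ := hχξ
      obtain ⟨i, hi, J, hJ⟩ := exists_not_le_app_of_not_le hle
      exact separable_pos_pos hΛ hφ.pos_inv.1 hi <|
        ih i J _ _ (isAntichain_step hΛ hφ.pos_inv.1 i J) (hφ.pos_inv.2 i hi J)
          (hχ.pos_inv.2 i hi J) hJ
    · exact separable_pos_of_ne hφ.pos_inv.1 hχ hχd fun k' h => hχξ ⟨k', h⟩
  · intro _ ih J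
    exact ih J

theorem exists_orth_of_separable {φ χ : PosDesign} (h : Separable {[]} φ χ) :
    ∃ ψ, WFN ψ [] ∅ ∧ orth φ ψ ∧ ¬ orth χ ψ := by
  obtain ⟨Ψ, hΨ, hsep⟩ := h
  exact ⟨Ψ [], hΨ [] (Finset.mem_singleton_self _), hsep _ (by simp)⟩

/-- the bi-orthogonal of a singleton design is its upward closure
in the observational order: `{φ}^⊥⊥ = { φ' | φ ⊑ φ' }` (within designs on the
base `⊢ ε`). -/
theorem biorthogonal_singleton (φ : PosDesign) (h : WFP φ {([] : List ℕ)}) :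
    {χ : PosDesign | WFP χ {([] : List ℕ)} ∧
        ∀ ψ : NegDesign, WFN ψ [] ∅ → orth φ ψ → orth χ ψ} =
      {χ : PosDesign | WFP χ {([] : List ℕ)} ∧ LeP true true φ χ} := by
  ext χ
  refine and_congr_right fun hχ => ⟨fun horth => ?_, fun hle _ _ => orth_mono hle⟩
  by_contra hle
  obtain ⟨ψ, hψ, hφψ, hχψ⟩ :=
    exists_orth_of_separable (separable_of_not_le φ χ {[]} (by simp) h hχ hle)
  exact hχψ (horth ψ hψ hφψ)
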